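/- Let L ∈ ℝ^{N×N} be a Laplacian matrix, let k be an index with ℓ_kk > 0, and let 𝒩 = {i ≠ k : ℓ_ki ≠ 0}. Assume the magnitudes |ℓ_ki| for i ∈ 𝒩 are pairwise distinct. Then ∑_{(i,j) : i,j ∈ 𝒩, |ℓ_ki| < |ℓ_kj|} (ℓ_ki ℓ_kj / ℓ_kk) · b_ij b_ijᵀ = L^(k) − (1/ℓ_kk) · L(:,k) L(k,:). (In the SampleClique algorithm, when i is processed the pair (i,j) with |ℓ_kj| > |ℓ_ki| is chosen with probability |ℓ_kj|/S and assigned weight S|ℓ_ki|/ℓ_kk where S = ∑_{j ∈ 𝒩, |ℓ_kj| > |ℓ_ki|} |ℓ_kj|; the products (|ℓ_kj|/S)·(S|ℓ_ki|/ℓ_kk) = ℓ_ki ℓ_kj/ℓ_kk sum to the exact clique update, so SampleClique is an unbiased estimator of the clique Laplacian.) -/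

import Mathlib

open Matrix Finset
open scoped Classical

/-- A matrix `L` is a Laplacian matrix if it is symmetric, every row sums to zero,
and off-diagonal entries are non-positive. -/
def IsLaplacian {N : ℕ} (L : Matrix (Fin N) (Fin N) ℝ) : Prop :=
  L.IsSymm ∧ (∀ i, ∑ j, L i j = 0) ∧ ∀ i j, i ≠ j → L i j ≤ 0

/-- The matrix `b_ij b_ijᵀ` where `b_ij = e_i - e_j` is the difference of two
standard basis vectors. -/
noncomputable def edgeMatrix {N : ℕ} (i j : Fin N) : Matrix (Fin N) (Fin N) ℝ :=
  Matrix.vecMulVec (Pi.single i 1 - Pi.single j 1) (Pi.single i 1 - Pi.single j 1)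

/-- `L^(k) = ∑_{i ≠ k} (−ℓ_ki) · b_ki b_kiᵀ`. -/
noncomputable def starLaplacian {N : ℕ} (L : Matrix (Fin N) (Fin N) ℝ) (k : Fin N) :
    Matrix (Fin N) (Fin N) ℝ :=
  ∑ i ∈ Finset.univ.filter (· ≠ k), (-(L k i)) • edgeMatrix k i

/-!
Write `w = L(k,:)`, `d = ℓ_kk` and `𝒩` for the neighbours of `k`. Zero row sums give
`∑_{i ∈ 𝒩} w_i = -d`, and symmetry gives `L(:,k) = d e_k + ∑_{i ∈ 𝒩} w_i e_i`. Expanding both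
sides, the identity reduces to the weighted Lagrange identity
`∑_{i,j ∈ 𝒩} w_i w_j (x_i - x_j)(x_i - x_j)ᵀ`
  `= 2 ((∑ w_i)(∑ w_i x_i x_iᵀ) - (∑ w_i x_i)(∑ w_i x_i)ᵀ)`
for `x_i = e_i`. Since the magnitudes `|w_i|` are distinct, the ordered pairs with `|w_i| < |w_j|`
contain exactly one of `(i, j)`, `(j, i)` for each `i ≠ j`, so they carry half of the symmetric
double sum over `𝒩 × 𝒩`, whose diagonal vanishes.
-/

namespace Finset

variable {ι : Type*}

theorem two_nsmul_sum_filter_lt {β M : Type*} [LinearOrder β] [AddCommMonoid M]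
    (s : Finset ι) {f : ι → β} (hf : Set.InjOn f s) {F : ι × ι → M}
    (hF : ∀ p, F p.swap = F p) (hF₀ : ∀ i, F (i, i) = 0) :
    2 • ∑ p ∈ (s ×ˢ s).filter (fun p => f p.1 < f p.2), F p = ∑ p ∈ s ×ˢ s, F p := by
  have hswap : ∑ p ∈ (s ×ˢ s).filter (fun p => f p.1 < f p.2), F p
      = ∑ p ∈ (s ×ˢ s).filter (fun p => f p.2 < f p.1), F p := by
    refine sum_nbij' Prod.swap Prod.swap ?_ ?_ (fun p _ => p.swap_swap) (fun p _ => p.swap_swap)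
      (fun p _ => (hF p).symm) <;>
    · intro p hp
      simp only [mem_filter, mem_product, Prod.fst_swap, Prod.snd_swap] at hp ⊢
      exact ⟨hp.1.symm, hp.2⟩
  have hdiag : ∑ p ∈ (s ×ˢ s).filter (fun p => f p.2 < f p.1), F p
      = ∑ p ∈ (s ×ˢ s).filter (fun p => ¬ f p.1 < f p.2), F p := by
    refine sum_subset (fun p hp => ?_) fun p hp hp' => ?_
    · simp only [mem_filter] at hp ⊢
      exact ⟨hp.1, not_lt.2 hp.2.le⟩
    · obtain ⟨i, j⟩ := p
      simp only [mem_filter, mem_product, not_lt, not_and] at hp hp'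
      obtain ⟨⟨hi, hj⟩, hle⟩ := hp
      obtain rfl : j = i := hf hj hi (le_antisymm hle (hp' ⟨hi, hj⟩))
      exact hF₀ j
  rw [two_nsmul]
  nth_rewrite 2 [hswap]
  rw [hdiag]
  exact sum_filter_add_sum_filter_not _ _ _

theorem sum_product_mul_mul_sub_mul_sub {R : Type*} [CommRing R] (s : Finset ι) (w f g : ι → R) :
    ∑ p ∈ s ×ˢ s, w p.1 * w p.2 * ((f p.1 - f p.2) * (g p.1 - g p.2))
      = 2 * ((∑ i ∈ s, w i) * ∑ i ∈ s, w i * f i * g i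
        - (∑ i ∈ s, w i * f i) * ∑ i ∈ s, w i * g i) := by
  calc ∑ p ∈ s ×ˢ s, w p.1 * w p.2 * ((f p.1 - f p.2) * (g p.1 - g p.2))
      = ∑ i ∈ s, ∑ j ∈ s, (w i * f i * g i * w j + w i * (w j * f j * g j)
          - w i * f i * (w j * g j) - w i * g i * (w j * f j)) := by
        rw [sum_product]; exact sum_congr rfl fun i _ => sum_congr rfl fun j _ => by ring
    _ = ∑ i ∈ s, (w i * f i * g i * ∑ j ∈ s, w j + w i * ∑ j ∈ s, w j * f j * g j
          - w i * f i * ∑ j ∈ s, w j * g j - w i * g i * ∑ j ∈ s, w j * f j) := by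
        simp only [sum_add_distrib, sum_sub_distrib, mul_sum]
    _ = _ := by
        simp only [sum_add_distrib, sum_sub_distrib, ← sum_mul]
        ring

end Finset

namespace Matrix

/-- Eliminating the centre `y` of a star with edge weights `-w i` towards the `x i` leaves the
clique with edge weights `w i * w j / d`, each edge counted once in each orientation. -/
theorem clique_eq_two_nsmul_schur_star {ι n K : Type*} [Field K] (s : Finset ι) (w : ι → K)
    {d : K} (hd : d ≠ 0) (hw : ∑ i ∈ s, w i = -d) (x : ι → n → K) (y : n → K) :
    ∑ p ∈ s ×ˢ s, (w p.1 * w p.2 / d) • vecMulVec (x p.1 - x p.2) (x p.1 - x p.2)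
      = 2 • (∑ i ∈ s, (-w i) • vecMulVec (y - x i) (y - x i)
        - d⁻¹ • vecMulVec (d • y + ∑ i ∈ s, w i • x i) (d • y + ∑ i ∈ s, w i • x i)) := by
  ext a b
  simp only [sum_apply, smul_apply, sub_apply, vecMulVec_apply, Pi.sub_apply, Pi.add_apply,
    Finset.sum_apply, Pi.smul_apply, smul_eq_mul, nsmul_eq_mul]
  have hstar : ∑ i ∈ s, -w i * ((y a - x i a) * (y b - x i b))
      = -(∑ i ∈ s, w i) * y a * y b + y a * ∑ i ∈ s, w i * x i b
        + y b * ∑ i ∈ s, w i * x i a - ∑ i ∈ s, w i * x i a * x i b := by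
    rw [sum_congr rfl fun i _ => show -w i * ((y a - x i a) * (y b - x i b))
      = -w i * y a * y b + y a * (w i * x i b) + y b * (w i * x i a) - w i * x i a * x i b
      by ring]
    simp only [sum_add_distrib, sum_sub_distrib, ← mul_sum, ← sum_mul, sum_neg_distrib]
  calc ∑ p ∈ s ×ˢ s, w p.1 * w p.2 / d * ((x p.1 a - x p.2 a) * (x p.1 b - x p.2 b))
      = d⁻¹ * ∑ p ∈ s ×ˢ s, w p.1 * w p.2 * ((x p.1 a - x p.2 a) * (x p.1 b - x p.2 b)) := by
        rw [mul_sum]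
        exact sum_congr rfl fun p _ => by ring
    _ = _ := by
        rw [Finset.sum_product_mul_mul_sub_mul_sub s w (x · a) (x · b), hstar, hw]
        field_simp
        ring

end Matrix

theorem edgeMatrix_comm {N : ℕ} (i j : Fin N) : edgeMatrix i j = edgeMatrix j i := by
  rw [edgeMatrix, edgeMatrix, ← neg_sub, neg_vecMulVec, vecMulVec_neg, neg_neg]

@[simp]
theorem edgeMatrix_self {N : ℕ} (i : Fin N) : edgeMatrix i i = 0 := by
  simp [edgeMatrix]

/-- The set `𝒩` of neighbours of `k`. -/
noncomputable def neighbors {N : ℕ} (L : Matrix (Fin N) (Fin N) ℝ) (k : Fin N) : Finset (Fin N) :=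
  univ.filter (fun i => i ≠ k ∧ L k i ≠ 0)

section neighbors

variable {N : ℕ} (L : Matrix (Fin N) (Fin N) ℝ) (k : Fin N)

@[simp]
theorem mem_neighbors {i : Fin N} : i ∈ neighbors L k ↔ i ≠ k ∧ L k i ≠ 0 := by
  simp [neighbors]

theorem sum_neighbors_eq_sum_erase {M : Type*} [AddCommMonoid M] {g : Fin N → M}
    (hg : ∀ i, L k i = 0 → g i = 0) : ∑ i ∈ neighbors L k, g i = ∑ i ∈ univ.erase k, g i := by
  have h : neighbors L k = (univ.erase k).filter (L k · ≠ 0) := by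
    ext i
    simp
  rw [h]
  exact sum_filter_of_ne fun i _ hi h0 => hi (hg i h0)

theorem starLaplacian_eq_sum_neighbors :
    starLaplacian L k = ∑ i ∈ neighbors L k, (-L k i) • edgeMatrix k i := by
  rw [sum_neighbors_eq_sum_erase L k fun i h => by rw [h, neg_zero, zero_smul], ← filter_ne']
  rfl

theorem smul_single_add_sum_neighbors :
    L k k • Pi.single k 1 + ∑ i ∈ neighbors L k, L k i • Pi.single i 1 = L k := by
  rw [sum_neighbors_eq_sum_erase L k fun i h => by rw [h, zero_smul],
    add_sum_erase _ (fun i => L k i • Pi.single i 1) (mem_univ k)]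
  exact (pi_eq_sum_univ' (L k)).symm

end neighbors

theorem IsLaplacian.sum_neighbors {N : ℕ} {L : Matrix (Fin N) (Fin N) ℝ} (hL : IsLaplacian L)
    (k : Fin N) : ∑ i ∈ neighbors L k, L k i = -L k k := by
  rw [sum_neighbors_eq_sum_erase L k fun i h => h, sum_erase_eq_sub (mem_univ k), hL.2.1 k,
    zero_sub]

/-- Unbiased estimator identity: for a Laplacian `L` with `ℓ_kk > 0`, neighbor set
`𝒩 = {i ≠ k : ℓ_ki ≠ 0}` with pairwise distinct magnitudes `|ℓ_ki|`, summing
`(ℓ_ki ℓ_kj / ℓ_kk) b_ij b_ijᵀ` over the ordered pairs `(i,j)` of neighbors with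
`|ℓ_ki| < |ℓ_kj|` yields exactly `L^(k) − (1/ℓ_kk) L(:,k) L(k,:)`. -/
theorem sampleClique_unbiased {N : ℕ} (L : Matrix (Fin N) (Fin N) ℝ)
    (hL : IsLaplacian L) (k : Fin N) (hk : 0 < L k k)
    (hdist : ∀ i j : Fin N, (i ≠ k ∧ L k i ≠ 0) → (j ≠ k ∧ L k j ≠ 0) → i ≠ j →
      |L k i| ≠ |L k j|) :
    ∑ p ∈ Finset.univ.filter (fun p : Fin N × Fin N =>
        (p.1 ≠ k ∧ L k p.1 ≠ 0) ∧ (p.2 ≠ k ∧ L k p.2 ≠ 0) ∧ |L k p.1| < |L k p.2|),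
      (L k p.1 * L k p.2 / L k k) • edgeMatrix p.1 p.2
    = starLaplacian L k - (L k k)⁻¹ • Matrix.vecMulVec (fun i => L i k) (L k) := by
  have hinj : Set.InjOn (fun i => |L k i|) (neighbors L k) := fun i hi j hj h => by
    by_contra hne
    exact hdist i j (by simpa using hi) (by simpa using hj) hne h
  have hpairs : univ.filter (fun p : Fin N × Fin N =>
      (p.1 ≠ k ∧ L k p.1 ≠ 0) ∧ (p.2 ≠ k ∧ L k p.2 ≠ 0) ∧ |L k p.1| < |L k p.2|)
      = (neighbors L k ×ˢ neighbors L k).filter (fun p => |L k p.1| < |L k p.2|) := by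
    ext p
    simp [and_assoc]
  have key := (two_nsmul_sum_filter_lt _ hinj
    (F := fun p => (L k p.1 * L k p.2 / L k k) • edgeMatrix p.1 p.2)
    (fun p => by simp only [Prod.fst_swap, Prod.snd_swap, mul_comm, edgeMatrix_comm])
    (fun i => by simp)).trans
    (clique_eq_two_nsmul_schur_star _ (L k) hk.ne' (hL.sum_neighbors k) (Pi.single · 1)
      (Pi.single k 1))
  rw [smul_single_add_sum_neighbors, ← ofNat_smul_eq_nsmul ℝ 2, ← ofNat_smul_eq_nsmul ℝ 2] at key
  rw [hpairs, starLaplacian_eq_sum_neighbors, show (fun i => L i k) = L k from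
    funext (hL.1.apply k)]
  exact smul_right_injective _ two_ne_zero key
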